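/- arXiv:1306.0068 — 6 statements merged into one kernel-verified Lean document; each statement's English description precedes it below -/
import Mathlib

section
/- Let p be a prime, k ≥ 2 an integer, α = √p, and let β be any nonzero complex number. Set μ₁ = p^{k-3/2}(α + α⁻¹ + β + β⁻¹) and μ₂ = p^{2k-3}((α + α⁻¹)² + (α + α⁻¹)(β + β⁻¹) + (β + β⁻¹)² − 2 − 1/p). Then μ₂ = μ₁² − (p^{k-1} + p^{k-2})·μ₁ + p^{2k-2}. -/
/-!
Write `s = √p`. Then `p ^ (k - 3/2) = s ^ (2k - 3)`, `p ^ (2k - 3) = s ^ (4k - 6)` and every other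
power of `p` in the statement is an integer power of `s`, so with `u = s ^ (2k - 3)` and
`b = β + β⁻¹` the claim becomes a rational identity in `u`, `s`, `b`. It holds because the Satake
parameter `α = s` satisfies `(s + s⁻¹)² - 2 - s⁻² = s²`.
-/

theorem maass_relation_of_satake_eq_sqrt {K : Type*} [Field K] {s : K} (hs : s ≠ 0) (k : ℤ)
    (b : K) :
    s ^ (4 * k - 6) * ((s + s⁻¹) ^ 2 + (s + s⁻¹) * b + b ^ 2 - 2 - (s ^ 2)⁻¹) =
      (s ^ (2 * k - 3) * (s + s⁻¹ + b)) ^ 2 -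
        ((s ^ 2) ^ (k - 1) + (s ^ 2) ^ (k - 2)) * (s ^ (2 * k - 3) * (s + s⁻¹ + b)) +
        (s ^ 2) ^ (2 * k - 2) := by
  set u := s ^ (2 * k - 3)
  have hu_sq : s ^ (4 * k - 6) = u ^ 2 := by
    rw [← zpow_natCast, ← zpow_mul]
    ring_nf
  have h_sub_one : (s ^ 2) ^ (k - 1) = u * s := by
    rw [← zpow_natCast, ← zpow_mul, ← zpow_add_one₀ hs]
    ring_nf
  have h_sub_two : (s ^ 2) ^ (k - 2) = u * s⁻¹ := by
    rw [← zpow_natCast, ← zpow_mul, ← zpow_sub_one₀ hs]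
    ring_nf
  have h_two_sub_two : (s ^ 2) ^ (2 * k - 2) = (u * s) ^ 2 := by
    rw [← h_sub_one, show 2 * k - 2 = (k - 1) * 2 by ring, zpow_mul]
    norm_cast
  rw [hu_sq, h_sub_one, h_sub_two, h_two_sub_two]
  field_simp
  ring

theorem stmt_4_general (p : ℕ) (hp : Nat.Prime p) (k : ℤ)
    (α : ℂ) (hα : α = (Real.sqrt p : ℂ)) (β : ℂ)
    (μ₁ μ₂ : ℂ)
    (hμ₁ : μ₁ = (((p : ℝ) ^ ((k : ℝ) - 3 / 2) : ℝ) : ℂ) * (α + α⁻¹ + β + β⁻¹))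
    (hμ₂ : μ₂ = (((p : ℝ) ^ (2 * (k : ℝ) - 3) : ℝ) : ℂ) *
        ((α + α⁻¹) ^ 2 + (α + α⁻¹) * (β + β⁻¹) + (β + β⁻¹) ^ 2 - 2 - (p : ℂ)⁻¹)) :
    μ₂ = μ₁ ^ 2 - ((p : ℂ) ^ (k - 1) + (p : ℂ) ^ (k - 2)) * μ₁ + (p : ℂ) ^ (2 * k - 2) := by
  have hp0 : (0 : ℝ) ≤ p := Nat.cast_nonneg p
  have hα0 : α ≠ 0 := by
    rw [hα, Complex.ofReal_ne_zero, Real.sqrt_ne_zero hp0]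
    exact_mod_cast hp.ne_zero
  have hp_eq : (p : ℂ) = α ^ 2 := by
    rw [hα, ← Complex.ofReal_pow, Real.sq_sqrt hp0, Complex.ofReal_natCast]
  have hμ₁' : μ₁ = α ^ (2 * k - 3) * (α + α⁻¹ + (β + β⁻¹)) := by
    rw [hμ₁, show (k : ℝ) - 3 / 2 = ((2 * k - 3 : ℤ) : ℝ) / 2 by push_cast; ring,
      Real.rpow_div_two_eq_sqrt _ hp0, Real.rpow_intCast, Complex.ofReal_zpow, ← hα, add_assoc]
  have hμ₂' : μ₂ = α ^ (4 * k - 6) *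
      ((α + α⁻¹) ^ 2 + (α + α⁻¹) * (β + β⁻¹) + (β + β⁻¹) ^ 2 - 2 - (α ^ 2)⁻¹) := by
    rw [hμ₂, show 2 * (k : ℝ) - 3 = ((4 * k - 6 : ℤ) : ℝ) / 2 by push_cast; ring,
      Real.rpow_div_two_eq_sqrt _ hp0, Real.rpow_intCast, Complex.ofReal_zpow, ← hα, hp_eq]
  rw [hμ₁', hμ₂', hp_eq]
  exact maass_relation_of_satake_eq_sqrt hα0 k (β + β⁻¹)

/-- Let `p` be a prime, `k ≥ 2` an integer, `α = √p`, and let `β` be any nonzero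
complex number. Set `μ₁ = p^(k-3/2) (α + α⁻¹ + β + β⁻¹)` and
`μ₂ = p^(2k-3) ((α+α⁻¹)² + (α+α⁻¹)(β+β⁻¹) + (β+β⁻¹)² − 2 − 1/p)`.
Then `μ₂ = μ₁² − (p^(k-1) + p^(k-2)) μ₁ + p^(2k-2)`. -/
theorem stmt_4 (p : ℕ) (hp : Nat.Prime p) (k : ℤ) (hk : 2 ≤ k)
    (α : ℂ) (hα : α = (Real.sqrt p : ℂ)) (β : ℂ) (hβ : β ≠ 0)
    (μ₁ μ₂ : ℂ)
    (hμ₁ : μ₁ = (((p : ℝ) ^ ((k : ℝ) - 3 / 2) : ℝ) : ℂ) * (α + α⁻¹ + β + β⁻¹))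
    (hμ₂ : μ₂ = (((p : ℝ) ^ (2 * (k : ℝ) - 3) : ℝ) : ℂ) *
        ((α + α⁻¹) ^ 2 + (α + α⁻¹) * (β + β⁻¹) + (β + β⁻¹) ^ 2 - 2 - (p : ℂ)⁻¹)) :
    μ₂ = μ₁ ^ 2 - ((p : ℂ) ^ (k - 1) + (p : ℂ) ^ (k - 2)) * μ₁ + (p : ℂ) ^ (2 * k - 2) :=
  stmt_4_general p hp k α hα β μ₁ μ₂ hμ₁ hμ₂
end

section
/- Let p be a prime, k ≥ 2 an integer, and let α, β be nonzero complex numbers. Set μ₁ = p^{k-3/2}(α + α⁻¹ + β + β⁻¹) and μ₂ = p^{2k-3}((α + α⁻¹)² + (α + α⁻¹)(β + β⁻¹) + (β + β⁻¹)² − 2 − 1/p). If μ₂ = μ₁² − (p^{k-1} + p^{k-2})·μ₁ + p^{2k-2}, then α ∈ {p^{1/2}, p^{-1/2}} or β ∈ {p^{1/2}, p^{-1/2}}. -/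
/-!
Write `c = √p`, `r = p^(k-3/2) = c^(2k-3)`, `A = α + α⁻¹`, `B = β + β⁻¹`. Then
`p^(k-1) = r c`, `p^(k-2) = r c⁻¹`, `p^(2k-2) = (r c)²`, and the difference of the two sides of
the Maass relation is `-r² (A - (c + c⁻¹)) (B - (c + c⁻¹))`. So `A` or `B` equals `c + c⁻¹`, and
`x + x⁻¹ = c + c⁻¹` forces `x ∈ {c, c⁻¹}`.
-/

theorem add_inv_eq_add_inv_iff {K : Type*} [Field K] {x c : K} (hx : x ≠ 0) (hc : c ≠ 0) :
    x + x⁻¹ = c + c⁻¹ ↔ x = c ∨ x = c⁻¹ := by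
  have factor : x + x⁻¹ - (c + c⁻¹) = (x - c) * (x * c - 1) / (x * c) := by
    field_simp; ring
  rw [← sub_eq_zero, factor, div_eq_zero_iff, mul_eq_zero, mul_eq_zero, sub_eq_zero,
    sub_eq_zero, mul_eq_one_iff_eq_inv₀ hc]
  simp [hx, hc]

theorem eq_add_inv_or_eq_add_inv_of_maass {K : Type*} [Field K] {r c A B : K}
    (hr : r ≠ 0) (hc : c ≠ 0)
    (h : r ^ 2 * (A ^ 2 + A * B + B ^ 2 - 2 - (c ^ 2)⁻¹) =
      (r * (A + B)) ^ 2 - (r * c + r * c⁻¹) * (r * (A + B)) + (r * c) ^ 2) :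
    A = c + c⁻¹ ∨ B = c + c⁻¹ := by
  have hfactor : r ^ 2 * ((A - (c + c⁻¹)) * (B - (c + c⁻¹))) = 0 := by
    linear_combination -h + 2 * r ^ 2 * mul_inv_cancel₀ hc
  simpa [hr, sub_eq_zero] using hfactor

theorem sq_zpow_sub_one {G : Type*} [GroupWithZero G] {c : G} (hc : c ≠ 0) (k : ℤ) :
    (c ^ 2) ^ (k - 1) = c ^ (2 * k - 3) * c := by
  rw [← zpow_natCast, ← zpow_mul, ← zpow_add_one₀ hc]; congr 1; push_cast; ring

theorem sq_zpow_sub_two {G : Type*} [GroupWithZero G] {c : G} (hc : c ≠ 0) (k : ℤ) :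
    (c ^ 2) ^ (k - 2) = c ^ (2 * k - 3) * c⁻¹ := by
  rw [← zpow_natCast, ← zpow_mul, ← zpow_sub_one₀ hc]; congr 1; push_cast; ring

theorem Real.rpow_intCast_div_two {x : ℝ} (hx : 0 ≤ x) (n : ℤ) : x ^ ((n : ℝ) / 2) = √x ^ n := by
  rw [Real.rpow_div_two_eq_sqrt _ hx, Real.rpow_intCast]

theorem stmt_6_general (p : ℕ) (hp : Nat.Prime p) (k : ℤ)
    (α β : ℂ) (hα : α ≠ 0) (hβ : β ≠ 0)
    (μ₁ μ₂ : ℂ)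
    (hμ₁ : μ₁ = (((p : ℝ) ^ ((k : ℝ) - 3 / 2) : ℝ) : ℂ) * (α + α⁻¹ + β + β⁻¹))
    (hμ₂ : μ₂ = (((p : ℝ) ^ (2 * (k : ℝ) - 3) : ℝ) : ℂ) *
        ((α + α⁻¹) ^ 2 + (α + α⁻¹) * (β + β⁻¹) + (β + β⁻¹) ^ 2 - 2 - (p : ℂ)⁻¹))
    (hrel : μ₂ = μ₁ ^ 2 - ((p : ℂ) ^ (k - 1) + (p : ℂ) ^ (k - 2)) * μ₁ + (p : ℂ) ^ (2 * k - 2)) :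
    (α = (Real.sqrt p : ℂ) ∨ α = ((Real.sqrt p : ℝ)⁻¹ : ℝ)) ∨
      (β = (Real.sqrt p : ℂ) ∨ β = ((Real.sqrt p : ℝ)⁻¹ : ℝ)) := by
  have hp0 : (0 : ℝ) ≤ p := Nat.cast_nonneg p
  obtain ⟨c, hc_def⟩ : ∃ c : ℂ, c = ((√p : ℝ) : ℂ) := ⟨_, rfl⟩
  have hc : c ≠ 0 := by
    simpa [hc_def] using hp.ne_zero
  have hpc : (p : ℂ) = c ^ 2 := by
    rw [hc_def, ← Complex.ofReal_pow, Real.sq_sqrt hp0, Complex.ofReal_natCast]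
  have hr : (((p : ℝ) ^ ((k : ℝ) - 3 / 2) : ℝ) : ℂ) = c ^ (2 * k - 3) := by
    rw [hc_def, ← Complex.ofReal_zpow, ← Real.rpow_intCast_div_two hp0]; push_cast; ring_nf
  have hr2 : (((p : ℝ) ^ (2 * (k : ℝ) - 3) : ℝ) : ℂ) = (c ^ (2 * k - 3)) ^ 2 := by
    rw [← zpow_natCast, ← zpow_mul, hc_def, ← Complex.ofReal_zpow,
      ← Real.rpow_intCast_div_two hp0]
    push_cast; ring_nf
  have h2k : (p : ℂ) ^ (2 * k - 2) = ((c ^ 2) ^ (k - 1)) ^ 2 := by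
    rw [← hpc, ← zpow_natCast, ← zpow_mul]; ring_nf
  rw [hμ₁, hμ₂, hr, hr2, h2k, hpc, sq_zpow_sub_one hc, sq_zpow_sub_two hc] at hrel
  obtain hA | hB := eq_add_inv_or_eq_add_inv_of_maass (A := α + α⁻¹) (B := β + β⁻¹)
    (zpow_ne_zero _ hc) hc (by linear_combination hrel)
  · left; simpa [hc_def] using (add_inv_eq_add_inv_iff hα hc).1 hA
  · right; simpa [hc_def] using (add_inv_eq_add_inv_iff hβ hc).1 hB

/-- Let `p` be a prime, `k ≥ 2` an integer, and let `α, β` be nonzero complex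
numbers. Set `μ₁ = p^(k-3/2) (α + α⁻¹ + β + β⁻¹)` and
`μ₂ = p^(2k-3) ((α+α⁻¹)² + (α+α⁻¹)(β+β⁻¹) + (β+β⁻¹)² − 2 − 1/p)`.
If `μ₂ = μ₁² − (p^(k-1) + p^(k-2)) μ₁ + p^(2k-2)`, then `α ∈ {p^(1/2), p^(-1/2)}` or
`β ∈ {p^(1/2), p^(-1/2)}`. -/
theorem stmt_6 (p : ℕ) (hp : Nat.Prime p) (k : ℤ) (hk : 2 ≤ k)
    (α β : ℂ) (hα : α ≠ 0) (hβ : β ≠ 0)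
    (μ₁ μ₂ : ℂ)
    (hμ₁ : μ₁ = (((p : ℝ) ^ ((k : ℝ) - 3 / 2) : ℝ) : ℂ) * (α + α⁻¹ + β + β⁻¹))
    (hμ₂ : μ₂ = (((p : ℝ) ^ (2 * (k : ℝ) - 3) : ℝ) : ℂ) *
        ((α + α⁻¹) ^ 2 + (α + α⁻¹) * (β + β⁻¹) + (β + β⁻¹) ^ 2 - 2 - (p : ℂ)⁻¹))
    (hrel : μ₂ = μ₁ ^ 2 - ((p : ℂ) ^ (k - 1) + (p : ℂ) ^ (k - 2)) * μ₁ + (p : ℂ) ^ (2 * k - 2)) :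
    (α = (Real.sqrt p : ℂ) ∨ α = ((Real.sqrt p : ℝ)⁻¹ : ℝ)) ∨
      (β = (Real.sqrt p : ℂ) ∨ β = ((Real.sqrt p : ℝ)⁻¹ : ℝ)) :=
  stmt_6_general p hp k α β hα hβ μ₁ μ₂ hμ₁ hμ₂ hrel
end

section
/- Let p ≥ 17 be a prime, k ≥ 2 an integer, and let α, β be nonzero complex numbers satisfying the dichotomy: either |α| = |β| = 1, or α = p^{1/2} and |β| = 1. Set μ₂ = p^{2k-3}((α + α⁻¹)² + (α + α⁻¹)(β + β⁻¹) + (β + β⁻¹)² − 2 − 1/p), which is then real. Then μ₂ > 10·p^{2k-3} if and only if α = p^{1/2} and |β| = 1. -/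
/-!
On the unit circle `z + z⁻¹ = 2 Re z ∈ [-2, 2]`, so in the Ramanujan case the bracket in `μ₂` is
at most `12 - 2 - 1/p < 10`. In the Saito-Kurokawa case `a = α + α⁻¹ = √p + 1/√p` is large, and
`a² + ab + b² ≥ 3a²/4 = 3(p + 2 + 1/p)/4` pushes the bracket above `10` as soon as `p ≥ 15`.
-/

/-- The bracket of `μ₂` in terms of `a = α + α⁻¹` and `b = β + β⁻¹`. -/
noncomputable def satakeBracket (p a b : ℝ) : ℝ := a ^ 2 + a * b + b ^ 2 - 2 - p⁻¹

lemma Complex.add_inv_eq_two_re_of_norm_eq_one {z : ℂ} (hz : ‖z‖ = 1) :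
    z + z⁻¹ = ((2 * z.re : ℝ) : ℂ) := by
  rw [Complex.inv_eq_conj hz, Complex.add_conj]

lemma Complex.abs_two_re_le_two_of_norm_eq_one {z : ℂ} (hz : ‖z‖ = 1) : |2 * z.re| ≤ 2 := by
  rw [abs_mul, abs_two]
  linarith [hz ▸ Complex.abs_re_le_norm z]

lemma sq_add_mul_add_sq_le_twelve {a b : ℝ} (ha : |a| ≤ 2) (hb : |b| ≤ 2) :
    a ^ 2 + a * b + b ^ 2 ≤ 12 := by
  obtain ⟨ha₁, ha₂⟩ := abs_le.mp ha
  obtain ⟨hb₁, hb₂⟩ := abs_le.mp hb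
  nlinarith [mul_nonneg (sub_nonneg.mpr ha₂) (sub_nonneg.mpr hb₂),
    mul_nonneg (neg_le_iff_add_nonneg.mp ha₁) (neg_le_iff_add_nonneg.mp hb₁)]

lemma three_mul_sq_le_four_mul_sq_add_mul_add_sq (a b : ℝ) :
    3 * a ^ 2 ≤ 4 * (a ^ 2 + a * b + b ^ 2) := by
  nlinarith [sq_nonneg (a + 2 * b)]

lemma Real.sqrt_add_inv_sqrt_sq {x : ℝ} (hx : 0 < x) :
    (√x + (√x)⁻¹) ^ 2 = x + 2 + x⁻¹ := by
  have hs : √x ≠ 0 := (Real.sqrt_pos.mpr hx).ne'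
  rw [add_sq, inv_pow, Real.sq_sqrt hx.le, mul_assoc, mul_inv_cancel₀ hs]
  ring

lemma satakeBracket_lt_ten {p a b : ℝ} (hp : 0 < p) (ha : |a| ≤ 2) (hb : |b| ≤ 2) :
    satakeBracket p a b < 10 := by
  unfold satakeBracket
  linarith [sq_add_mul_add_sq_le_twelve ha hb, inv_pos.mpr hp]

lemma ten_lt_satakeBracket {p : ℝ} (hp : 15 ≤ p) (b : ℝ) :
    10 < satakeBracket p (√p + (√p)⁻¹) b := by
  have hp₀ : 0 < p := by linarith
  have hbound := three_mul_sq_le_four_mul_sq_add_mul_add_sq (√p + (√p)⁻¹) b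
  have hinv : p⁻¹ ≤ 1 := inv_le_one_of_one_le₀ (by linarith)
  rw [Real.sqrt_add_inv_sqrt_sq hp₀] at hbound
  rw [satakeBracket, Real.sqrt_add_inv_sqrt_sq hp₀]
  linarith

lemma Complex.ofReal_satakeBracket (p a b : ℝ) :
    ((satakeBracket p a b : ℝ) : ℂ) = (a : ℂ) ^ 2 + a * b + b ^ 2 - 2 - (p : ℂ)⁻¹ := by
  simp only [satakeBracket]
  push_cast
  ring

theorem stmt_10_general (p : ℕ) (hp17 : 17 ≤ p) (k : ℤ)
    (α β : ℂ)
    (hdich : (‖α‖ = 1 ∧ ‖β‖ = 1) ∨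
      (α = (Real.sqrt p : ℂ) ∧ ‖β‖ = 1)) :
    ∃ μ₂ : ℝ,
      (μ₂ : ℂ) = (((p : ℝ) ^ (2 * (k : ℝ) - 3) : ℝ) : ℂ) *
          ((α + α⁻¹) ^ 2 + (α + α⁻¹) * (β + β⁻¹) + (β + β⁻¹) ^ 2 - 2 - (p : ℂ)⁻¹) ∧
      (μ₂ > 10 * (p : ℝ) ^ (2 * (k : ℝ) - 3) ↔
        α = (Real.sqrt p : ℂ) ∧ ‖β‖ = 1) := by
  have hp : (17 : ℝ) ≤ p := by exact_mod_cast hp17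
  set c : ℝ := (p : ℝ) ^ (2 * (k : ℝ) - 3)
  have hc : 0 < c := Real.rpow_pos_of_pos (by linarith) _
  have hβ₁ : ‖β‖ = 1 := hdich.elim And.right And.right
  rw [Complex.add_inv_eq_two_re_of_norm_eq_one hβ₁]
  rcases hdich with ⟨hα₁, -⟩ | ⟨hα, -⟩
  · refine ⟨c * satakeBracket p (2 * α.re) (2 * β.re), ?_, iff_of_false ?_ ?_⟩
    · rw [Complex.add_inv_eq_two_re_of_norm_eq_one hα₁, Complex.ofReal_mul,
        Complex.ofReal_satakeBracket, Complex.ofReal_natCast]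
    · rw [gt_iff_lt, mul_comm, mul_lt_mul_iff_right₀ hc, not_lt]
      exact (satakeBracket_lt_ten (by linarith) (Complex.abs_two_re_le_two_of_norm_eq_one hα₁)
        (Complex.abs_two_re_le_two_of_norm_eq_one hβ₁)).le
    · rintro ⟨rfl, -⟩
      rw [Complex.norm_real, Real.norm_of_nonneg (Real.sqrt_nonneg _), Real.sqrt_eq_one] at hα₁
      linarith
  · refine ⟨c * satakeBracket p (√p + (√p)⁻¹) (2 * β.re), ?_, iff_of_true ?_ ⟨hα, hβ₁⟩⟩
    · rw [hα, Complex.ofReal_mul, Complex.ofReal_satakeBracket, Complex.ofReal_natCast]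
      push_cast
      ring
    · rw [gt_iff_lt, mul_comm, mul_lt_mul_iff_right₀ hc]
      exact ten_lt_satakeBracket (by linarith) _

/-- Let `p ≥ 17` be a prime, `k ≥ 2` an integer, and let `α, β` be nonzero
complex numbers satisfying the dichotomy: either `|α| = |β| = 1`, or `α = p^(1/2)` and
`|β| = 1`. Set `μ₂ = p^(2k-3) ((α+α⁻¹)² + (α+α⁻¹)(β+β⁻¹) + (β+β⁻¹)² − 2 − 1/p)`, which is
then real. Then `μ₂ > 10 p^(2k-3)` if and only if `α = p^(1/2)` and `|β| = 1`. -/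
theorem stmt_10 (p : ℕ) (hp : Nat.Prime p) (hp17 : 17 ≤ p) (k : ℤ) (hk : 2 ≤ k)
    (α β : ℂ) (hα : α ≠ 0) (hβ : β ≠ 0)
    (hdich : (‖α‖ = 1 ∧ ‖β‖ = 1) ∨
      (α = (Real.sqrt p : ℂ) ∧ ‖β‖ = 1)) :
    ∃ μ₂ : ℝ,
      (μ₂ : ℂ) = (((p : ℝ) ^ (2 * (k : ℝ) - 3) : ℝ) : ℂ) *
          ((α + α⁻¹) ^ 2 + (α + α⁻¹) * (β + β⁻¹) + (β + β⁻¹) ^ 2 - 2 - (p : ℂ)⁻¹) ∧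
      (μ₂ > 10 * (p : ℝ) ^ (2 * (k : ℝ) - 3) ↔
        α = (Real.sqrt p : ℂ) ∧ ‖β‖ = 1) :=
  stmt_10_general p hp17 k α β hdich
end

section
/- For a prime number p, setting s = √p + 1/√p, the following are equivalent: (a) for every real number y with |y| ≤ 2 one has s² + s·y + y² − 2 − 1/p > 10; (b) p ≥ 17. -/
/-! With `t = √p`, the increment of `y ↦ s² + s y + y²` from `y = -2` factors as
`(y + 2) (y + s - 2)`, which is nonnegative on `[-2, 2]` as soon as `s ≥ 4`, i.e. for `p ≥ 16`.
So (a) amounts to its instance `y = -2`, which reads `t² - 2t - 2/t > 6`; for an integer `p = t²`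
this holds exactly when `p ≥ 15` (it fails barely at `p = 14`), and among primes when `p ≥ 17`. -/

open Real

lemma sq_add_mul_add_sq_neg_two_le {s y : ℝ} (hs : 4 ≤ s) (hy : -2 ≤ y) :
    s ^ 2 + s * (-2) + (-2) ^ 2 ≤ s ^ 2 + s * y + y ^ 2 := by
  nlinarith [mul_nonneg (show 0 ≤ y + 2 by linarith) (show 0 ≤ y + s - 2 by linarith)]

lemma add_inv_sq_add_mul_neg_two_eq (t : ℝ) (ht : t ≠ 0) :
    (t + t⁻¹) ^ 2 + (t + t⁻¹) * (-2) + (-2) ^ 2 - 2 - (t ^ 2)⁻¹ = t ^ 2 - 2 * t - 2 / t + 4 := by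
  field_simp
  ring

lemma six_lt_sub_two_mul_sqrt_sub_two_div_sqrt_iff (n : ℕ) :
    6 < (n : ℝ) - 2 * √n - 2 / √n ↔ 15 ≤ n := by
  rcases Nat.eq_zero_or_pos n with rfl | hn
  · norm_num
  have ht : 0 < √(n : ℝ) := sqrt_pos.2 (by exact_mod_cast hn)
  have hsq : √(n : ℝ) ^ 2 = n := sq_sqrt (Nat.cast_nonneg n)
  have hcubic : 6 < (n : ℝ) - 2 * √n - 2 / √n ↔ 2 * n + 2 < √n * (n - 6) := by
    rw [← sub_pos, ← sub_pos (a := _ * _), show (n : ℝ) - 2 * √n - 2 / √n - 6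
      = (√n * (n - 6) - (2 * n + 2)) / √n by field_simp; nlinarith, div_pos_iff_of_pos_right ht]
  rw [hcubic]
  constructor
  · intro h
    by_contra! hlt
    have hn14 : (n : ℝ) ≤ 14 := by exact_mod_cast Nat.le_of_lt_succ hlt
    have ht14 : √(n : ℝ) < 3.7417 := by nlinarith
    nlinarith
  · intro h
    have hn15 : (15 : ℝ) ≤ n := by exact_mod_cast h
    have ht15 : 3.87 < √(n : ℝ) := by nlinarith
    nlinarith

lemma Nat.Prime.seventeen_le_of_fifteen_le {p : ℕ} (hp : p.Prime) (h : 15 ≤ p) : 17 ≤ p := by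
  by_contra! hlt
  interval_cases p <;> norm_num at hp

/-- For a prime number `p`, setting `s = √p + 1/√p`, the following are
equivalent: (a) for every real `y` with `|y| ≤ 2` one has `s² + s y + y² − 2 − 1/p > 10`;
(b) `p ≥ 17`. -/
theorem stmt_12 (p : ℕ) (hp : Nat.Prime p) (s : ℝ) (hs : s = Real.sqrt p + (Real.sqrt p)⁻¹) :
    (∀ y : ℝ, |y| ≤ 2 → s ^ 2 + s * y + y ^ 2 - 2 - (p : ℝ)⁻¹ > 10) ↔ 17 ≤ p := by
  have ht : 0 < √(p : ℝ) := sqrt_pos.2 (by exact_mod_cast hp.pos)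
  have hsq : √(p : ℝ) ^ 2 = p := sq_sqrt (Nat.cast_nonneg p)
  have hmin : s ^ 2 + s * (-2) + (-2) ^ 2 - 2 - (p : ℝ)⁻¹ = p - 2 * √p - 2 / √p + 4 := by
    simpa only [hs, hsq] using add_inv_sq_add_mul_neg_two_eq _ ht.ne'
  constructor
  · intro h
    have h₂ := h (-2) (by norm_num)
    exact hp.seventeen_le_of_fifteen_le <|
      (six_lt_sub_two_mul_sqrt_sub_two_div_sqrt_iff p).1 (by linarith)
  · intro h y hy
    have h₆ := (six_lt_sub_two_mul_sqrt_sub_two_div_sqrt_iff p).2 (by omega)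
    have ht₄ : 4 ≤ √(p : ℝ) := (le_sqrt' (by norm_num)).2 (by norm_cast; omega)
    have hs₄ : 4 ≤ s := hs ▸ le_add_of_le_of_nonneg ht₄ (inv_nonneg.2 ht.le)
    linarith [sq_add_mul_add_sq_neg_two_le hs₄ (abs_le.1 hy).1]
end

section
/- Let p be a prime and let α, β be complex numbers with |α| = |β| = 1. Let c_r (r ≥ 0) denote the coefficients of the formal power series expansion of (1 − p⁻¹·X²) / ((1 − α·X)(1 − α⁻¹·X)(1 − β·X)(1 − β⁻¹·X)) over ℂ. Then for every r ≥ 0, |c_r| ≤ C(r+3, 3) + p⁻¹·C(r+1, 3), where C(n, 3) denotes the binomial coefficient n choose 3. -/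
/-!
Every factor `(1 - γX)⁻¹ = ∑ γⁿXⁿ` with `|γ| = 1` is coefficientwise majorized by
`(1 - X)⁻¹ = ∑ Xⁿ`, and `1 - p⁻¹X²` by `1 + p⁻¹X²`. Majorants multiply, so the series is majorized
by `(1 + p⁻¹X²)(1 - X)⁻⁴ = (1 + p⁻¹X²) ∑ C(n+3, 3) Xⁿ`, whose `r`-th coefficient is
`C(r+3, 3) + p⁻¹ C(r+1, 3)`.
-/

open PowerSeries

namespace PowerSeries

variable {R : Type*}

theorem one_sub_C_mul_X_mul_mk_pow [Ring R] (a : R) : (1 - C a * X) * mk (a ^ ·) = 1 := by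
  ext n
  rcases n with _ | n
  · simp
  · simp [sub_mul, mul_assoc, coeff_one, pow_succ']

theorem inv_one_sub_C_mul_X {k : Type*} [Field k] (a : k) : (1 - C a * X)⁻¹ = mk (a ^ ·) :=
  (inv_eq_iff_mul_eq_one (by simp)).2 <| by rw [mul_comm, one_sub_C_mul_X_mul_mk_pow]

section Majorant

variable [NormedRing R]

theorem norm_coeff_mul_le {f g : R⟦X⟧} {F G : ℝ⟦X⟧} (hf : ∀ n, ‖coeff n f‖ ≤ coeff n F)
    (hg : ∀ n, ‖coeff n g‖ ≤ coeff n G) (n : ℕ) : ‖coeff n (f * g)‖ ≤ coeff n (F * G) := by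
  rw [coeff_mul, coeff_mul]
  refine (norm_sum_le _ _).trans (Finset.sum_le_sum fun ij _ => (norm_mul_le _ _).trans ?_)
  exact mul_le_mul (hf _) (hg _) (norm_nonneg _) ((norm_nonneg _).trans (hf _))

theorem norm_coeff_one_sub_C_mul_X_pow_le [NormOneClass R] (c : R) (k n : ℕ) :
    ‖coeff n (1 - C c * X ^ k)‖ ≤ coeff n (1 + C ‖c‖ * X ^ k) := by
  rw [map_sub, map_add]
  refine (norm_sub_le _ _).trans (add_le_add ?_ ?_) <;>
    simp only [coeff_one, coeff_C_mul_X_pow] <;> split_ifs <;> simp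

variable [NormOneClass R]

theorem norm_coeff_mk_pow_le {a : R} (ha : ‖a‖ ≤ 1) (n : ℕ) :
    ‖coeff n (mk (a ^ ·))‖ ≤ coeff n (mk 1 : ℝ⟦X⟧) := by
  simpa using (norm_pow_le a n).trans (pow_le_one₀ (norm_nonneg a) ha)

end Majorant

theorem norm_coeff_prod_mk_pow_le [NormedCommRing R] [NormOneClass R] {ι : Type*} (s : Finset ι)
    (a : ι → R) (ha : ∀ i ∈ s, ‖a i‖ ≤ 1) (n : ℕ) :
    ‖coeff n (∏ i ∈ s, mk (a i ^ ·))‖ ≤ coeff n ((mk 1 : ℝ⟦X⟧) ^ s.card) := by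
  classical
  induction s using Finset.induction_on generalizing n with
  | empty =>
    rw [Finset.prod_empty, Finset.card_empty, pow_zero, coeff_one, coeff_one]
    split_ifs <;> simp
  | insert i s hi ih =>
    rw [Finset.prod_insert hi, Finset.card_insert_of_notMem hi, pow_succ']
    exact norm_coeff_mul_le (norm_coeff_mk_pow_le (ha i (s.mem_insert_self i)))
      (ih fun j hj => ha j (Finset.mem_insert_of_mem hj)) n

theorem coeff_one_add_C_mul_X_sq_mul_mk_choose (q : ℝ) (r : ℕ) :
    coeff r ((1 + C q * X ^ 2) * mk fun n => ((3 + n).choose 3 : ℝ)) =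
      (r + 3).choose 3 + q * (r + 1).choose 3 := by
  rw [add_mul, one_mul, mul_assoc, map_add, coeff_C_mul, coeff_X_pow_mul', coeff_mk, add_comm 3]
  rcases r with _ | _ | d
  · simp [Nat.choose_eq_zero_of_lt]
  · simp
  · simp [add_comm 3 d]

end PowerSeries

theorem stmt_13_general (p : ℕ) (α β : ℂ)
    (hα : ‖α‖ = 1) (hβ : ‖β‖ = 1)
    (f : PowerSeries ℂ)
    (hf : f = (1 - PowerSeries.C (p : ℂ)⁻¹ * PowerSeries.X ^ 2) *
        ((1 - PowerSeries.C α * PowerSeries.X) *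
          (1 - PowerSeries.C α⁻¹ * PowerSeries.X) *
          (1 - PowerSeries.C β * PowerSeries.X) *
          (1 - PowerSeries.C β⁻¹ * PowerSeries.X))⁻¹) :
    ∀ r : ℕ, ‖PowerSeries.coeff r f‖ ≤
      ((r + 3).choose 3 : ℝ) + (p : ℝ)⁻¹ * ((r + 1).choose 3 : ℝ) := by
  intro r
  have hinv : ((1 - C α * X) * (1 - C α⁻¹ * X) * (1 - C β * X) * (1 - C β⁻¹ * X))⁻¹ =
      ∏ i : Fin 4, mk (![α, α⁻¹, β, β⁻¹] i ^ ·) := by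
    simp only [PowerSeries.mul_inv_rev, inv_one_sub_C_mul_X, Fin.prod_univ_four, Matrix.cons_val]
    ring
  have hunit : ∀ i, ‖![α, α⁻¹, β, β⁻¹] i‖ ≤ 1 := by
    intro i; fin_cases i <;> simp [hα, hβ]
  calc ‖coeff r f‖
      ≤ coeff r ((1 + C ‖(p : ℂ)⁻¹‖ * X ^ 2) * (mk 1 : ℝ⟦X⟧) ^ (3 + 1)) := by
        rw [hf, hinv]
        exact norm_coeff_mul_le (norm_coeff_one_sub_C_mul_X_pow_le _ 2)
          (norm_coeff_prod_mk_pow_le _ _ fun i _ => hunit i) r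
    _ = _ := by
        rw [mk_one_pow_eq_mk_choose_add, coeff_one_add_C_mul_X_sq_mul_mk_choose, norm_inv,
          Complex.norm_natCast]

/-- Let `p` be a prime and `α, β` complex numbers with `|α| = |β| = 1`. Let
`c_r` denote the coefficients of the formal power series
`(1 − p⁻¹ X²) / ((1 − αX)(1 − α⁻¹X)(1 − βX)(1 − β⁻¹X))` over `ℂ`. Then for every `r ≥ 0`,
`|c_r| ≤ C(r+3, 3) + p⁻¹ C(r+1, 3)`. -/
theorem stmt_13 (p : ℕ) (hp : Nat.Prime p) (α β : ℂ)
    (hα : ‖α‖ = 1) (hβ : ‖β‖ = 1)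
    (f : PowerSeries ℂ)
    (hf : f = (1 - PowerSeries.C (p : ℂ)⁻¹ * PowerSeries.X ^ 2) *
        ((1 - PowerSeries.C α * PowerSeries.X) *
          (1 - PowerSeries.C α⁻¹ * PowerSeries.X) *
          (1 - PowerSeries.C β * PowerSeries.X) *
          (1 - PowerSeries.C β⁻¹ * PowerSeries.X))⁻¹) :
    ∀ r : ℕ, ‖PowerSeries.coeff r f‖ ≤
      ((r + 3).choose 3 : ℝ) + (p : ℝ)⁻¹ * ((r + 1).choose 3 : ℝ) :=
  stmt_13_general p α β hα hβ f hf
end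

section
/- Let p be a prime, and let α, β be nonzero complex numbers with μ₁ = p^{k-3/2}(α + α⁻¹ + β + β⁻¹) for an integer k ≥ 2. Suppose μ₂ = p^{2k-3}((α + α⁻¹)² + (α + α⁻¹)(β + β⁻¹) + (β + β⁻¹)² − 2 − 1/p) satisfies μ₂ = μ₁² − (p^{k-1} + p^{k-2})·μ₁ + p^{2k-2}. Set Z₁ = p^{k-3/2}(p^{1/2} + p^{-1/2}) and Z₂ = p^{k-3/2}(α + α⁻¹). Then Z₁ + Z₂ = μ₁ or Z₁ = Z₂. -/
section MaassRelation

variable {F : Type*} [Field F] {P s A B : F}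

theorem maass_relation_defect_eq (hs : s ≠ 0) :
    (P * (A + B)) ^ 2 - (P * s + P * s⁻¹) * (P * (A + B)) + (P * s) ^ 2
      - P ^ 2 * (A ^ 2 + A * B + B ^ 2 - 2 - (s ^ 2)⁻¹)
      = P ^ 2 * ((A - (s + s⁻¹)) * (B - (s + s⁻¹))) := by
  field_simp
  ring

theorem eq_or_eq_of_maass_relation (hP : P ≠ 0) (hs : s ≠ 0)
    (h : P ^ 2 * (A ^ 2 + A * B + B ^ 2 - 2 - (s ^ 2)⁻¹)
      = (P * (A + B)) ^ 2 - (P * s + P * s⁻¹) * (P * (A + B)) + (P * s) ^ 2) :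
    A = s + s⁻¹ ∨ B = s + s⁻¹ := by
  have hdefect := maass_relation_defect_eq (P := P) (A := A) (B := B) hs
  rw [← h, sub_self, eq_comm] at hdefect
  simpa [hP, sub_eq_zero] using hdefect

theorem eq_or_eq_of_maass_relation_zpow (hs : s ≠ 0) {k : ℤ}
    (h : (s ^ (2 * k - 3)) ^ 2 * (A ^ 2 + A * B + B ^ 2 - 2 - (s ^ 2)⁻¹)
      = (s ^ (2 * k - 3) * (A + B)) ^ 2
        - ((s ^ 2) ^ (k - 1) + (s ^ 2) ^ (k - 2)) * (s ^ (2 * k - 3) * (A + B))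
        + (s ^ 2) ^ (2 * k - 2)) :
    A = s + s⁻¹ ∨ B = s + s⁻¹ := by
  have h₁ : (s ^ 2) ^ (k - 1) = s ^ (2 * k - 3) * s := by
    rw [← zpow_add_one₀ hs, ← zpow_natCast, ← zpow_mul]; ring_nf
  have h₂ : (s ^ 2) ^ (k - 2) = s ^ (2 * k - 3) * s⁻¹ := by
    rw [← zpow_sub_one₀ hs, ← zpow_natCast, ← zpow_mul]; ring_nf
  have h₃ : (s ^ 2) ^ (2 * k - 2) = (s ^ (2 * k - 3) * s) ^ 2 := by
    rw [← h₁, ← zpow_natCast ((s ^ 2) ^ (k - 1)) 2, ← zpow_mul]; ring_nf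
  rw [h₁, h₂, h₃] at h
  exact eq_or_eq_of_maass_relation (zpow_ne_zero _ hs) hs h

end MaassRelation

theorem stmt_15_general (p : ℕ) (hp : Nat.Prime p) (k : ℤ)
    (α β : ℂ)
    (μ₁ μ₂ : ℂ)
    (hμ₁ : μ₁ = (((p : ℝ) ^ ((k : ℝ) - 3 / 2) : ℝ) : ℂ) * (α + α⁻¹ + β + β⁻¹))
    (hμ₂ : μ₂ = (((p : ℝ) ^ (2 * (k : ℝ) - 3) : ℝ) : ℂ) *
        ((α + α⁻¹) ^ 2 + (α + α⁻¹) * (β + β⁻¹) + (β + β⁻¹) ^ 2 - 2 - (p : ℂ)⁻¹))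
    (hrel : μ₂ = μ₁ ^ 2 - ((p : ℂ) ^ (k - 1) + (p : ℂ) ^ (k - 2)) * μ₁ + (p : ℂ) ^ (2 * k - 2))
    (Z₁ Z₂ : ℂ)
    (hZ₁ : Z₁ = (((p : ℝ) ^ ((k : ℝ) - 3 / 2) : ℝ) : ℂ) *
        ((Real.sqrt p : ℂ) + ((Real.sqrt p : ℝ)⁻¹ : ℝ)))
    (hZ₂ : Z₂ = (((p : ℝ) ^ ((k : ℝ) - 3 / 2) : ℝ) : ℂ) * (α + α⁻¹)) :
    Z₁ + Z₂ = μ₁ ∨ Z₁ = Z₂ := by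
  set s : ℂ := (√(p : ℝ) : ℂ)
  have hs : s ≠ 0 := by simpa [s] using hp.ne_zero
  have hps : (p : ℂ) = s ^ 2 := by simp [s, ← Complex.ofReal_pow]
  have hP : (((p : ℝ) ^ ((k : ℝ) - 3 / 2) : ℝ) : ℂ) = s ^ (2 * k - 3) := by
    rw [show (k : ℝ) - 3 / 2 = ((2 * k - 3 : ℤ) : ℝ) / 2 by push_cast; ring,
      Real.rpow_intCast_div_two p.cast_nonneg]
    push_cast; rfl
  have hP2 : (((p : ℝ) ^ (2 * (k : ℝ) - 3) : ℝ) : ℂ) = (s ^ (2 * k - 3)) ^ 2 := by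
    rw [← hP, ← Complex.ofReal_pow, ← Real.rpow_mul_natCast p.cast_nonneg]
    push_cast; ring_nf
  rw [hP] at hμ₁ hZ₁ hZ₂
  rw [add_assoc (α + α⁻¹)] at hμ₁
  rw [hP2, hps] at hμ₂
  rw [hμ₁, hμ₂, hps] at hrel
  rcases eq_or_eq_of_maass_relation_zpow hs hrel with hA | hB
  · right
    rw [hZ₁, hZ₂, hA]
    push_cast; rfl
  · left
    rw [hZ₁, hZ₂, hμ₁, hB]
    push_cast; ring

/-- Let `p` be a prime and `α, β` nonzero complex numbers with
`μ₁ = p^(k-3/2) (α + α⁻¹ + β + β⁻¹)` for an integer `k ≥ 2`. Suppose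
`μ₂ = p^(2k-3) ((α+α⁻¹)² + (α+α⁻¹)(β+β⁻¹) + (β+β⁻¹)² − 2 − 1/p)` satisfies
`μ₂ = μ₁² − (p^(k-1) + p^(k-2)) μ₁ + p^(2k-2)`. Set `Z₁ = p^(k-3/2) (p^(1/2) + p^(-1/2))`
and `Z₂ = p^(k-3/2) (α + α⁻¹)`. Then `Z₁ + Z₂ = μ₁` or `Z₁ = Z₂`. -/
theorem stmt_15 (p : ℕ) (hp : Nat.Prime p) (k : ℤ) (hk : 2 ≤ k)
    (α β : ℂ) (hα : α ≠ 0) (hβ : β ≠ 0)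
    (μ₁ μ₂ : ℂ)
    (hμ₁ : μ₁ = (((p : ℝ) ^ ((k : ℝ) - 3 / 2) : ℝ) : ℂ) * (α + α⁻¹ + β + β⁻¹))
    (hμ₂ : μ₂ = (((p : ℝ) ^ (2 * (k : ℝ) - 3) : ℝ) : ℂ) *
        ((α + α⁻¹) ^ 2 + (α + α⁻¹) * (β + β⁻¹) + (β + β⁻¹) ^ 2 - 2 - (p : ℂ)⁻¹))
    (hrel : μ₂ = μ₁ ^ 2 - ((p : ℂ) ^ (k - 1) + (p : ℂ) ^ (k - 2)) * μ₁ + (p : ℂ) ^ (2 * k - 2))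
    (Z₁ Z₂ : ℂ)
    (hZ₁ : Z₁ = (((p : ℝ) ^ ((k : ℝ) - 3 / 2) : ℝ) : ℂ) *
        ((Real.sqrt p : ℂ) + ((Real.sqrt p : ℝ)⁻¹ : ℝ)))
    (hZ₂ : Z₂ = (((p : ℝ) ^ ((k : ℝ) - 3 / 2) : ℝ) : ℂ) * (α + α⁻¹)) :
    Z₁ + Z₂ = μ₁ ∨ Z₁ = Z₂ :=
  stmt_15_general p hp k α β μ₁ μ₂ hμ₁ hμ₂ hrel Z₁ Z₂ hZ₁ hZ₂
end
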